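/- Let d ≥ 1, 0 < λ ≤ Λ, C₀ > c₀ > 0, K > 0, let ν ∈ ℝ^d be a unit vector, let c₁, c₂ : ℝ^{d+1} → ℝ be continuous functions bounded in absolute value by K, and let ξ : ℝ^{d+1} → S^{d−1} be a continuous unit vector field. Then there exist constants c > 0 and C > 0, depending only on λ, Λ, d, c₀, C₀ and K, with the following property: for every ε > 0 and L > 0 with Lε ≤ c, if w is upper semicontinuous on closure(Q_L), is a viscosity subsolution of ∂_t w − P⁺(D²w) − (ε c₁(x,t) + ε³ c₂(x,t)·t) ξ(x,t)·Dw = 0 in Q_L, satisfies w ≤ c₀ on closure(Q_L) ∩ ∂P_ν and w ≤ C₀ on closure(Q_L), then for every R < L one has w(x,t) ≤ c₀ + C·R/L for all (x,t) ∈ Q_R. -/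

import Mathlib

open Set Filter Topology
open scoped Classical

noncomputable section

abbrev Mat (d : ℕ) := Matrix (Fin d) (Fin d) ℝ
abbrev Spc (d : ℕ) := EuclideanSpace ℝ (Fin d)

/-- Euclidean dot product. -/
def dotR {d : ℕ} (x y : Spc d) : ℝ := ∑ i, x i * y i

/-- The vector in `ℝ^d` with integer coordinates `k`. -/
def intVec {d : ℕ} (k : Fin d → ℤ) : Spc d :=
  (WithLp.equiv 2 (Fin d → ℝ)).symm fun i => (k i : ℝ)

/-- A direction is rational if it is a real multiple of a nonzero integer vector. -/
def IsRatDir {d : ℕ} (ν : Spc d) : Prop :=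
  ∃ k : Fin d → ℤ, intVec k ≠ 0 ∧ ∃ c : ℝ, ν = c • intVec k

/-- Pucci maximal operator `P⁺(M) = Σ_{e>0} Λ e + Σ_{e<0} λ e` over the eigenvalues of `M`. -/
noncomputable def pucciPlus (lam Lam : ℝ) {d : ℕ} (M : Mat d) : ℝ :=
  if hM : M.IsHermitian then
    ∑ i, (Lam * max (hM.eigenvalues i) 0 + lam * min (hM.eigenvalues i) 0)
  else 0

noncomputable def timeDeriv {d : ℕ} (φ : Spc d × ℝ → ℝ) (p : Spc d × ℝ) : ℝ :=
  deriv (fun s => φ (p.1, s)) p.2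

noncomputable def spaceGrad {d : ℕ} (φ : Spc d × ℝ → ℝ) (p : Spc d × ℝ) : Spc d :=
  (WithLp.equiv 2 (Fin d → ℝ)).symm fun i =>
    fderiv ℝ (fun y => φ (y, p.2)) p.1 (EuclideanSpace.single i 1)

noncomputable def spaceHess {d : ℕ} (φ : Spc d × ℝ → ℝ) (p : Spc d × ℝ) : Mat d :=
  Matrix.of fun i j =>
    fderiv ℝ (fun y => (fderiv ℝ (fun z => φ (z, p.2)) y) (EuclideanSpace.single j 1))
      p.1 (EuclideanSpace.single i 1)

/-- Viscosity subsolution of `∂ₜ u - H(D²u, Du, (x,t)) = 0` on `O`. -/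
def ViscSubsol {d : ℕ} (O : Set (Spc d × ℝ)) (u : Spc d × ℝ → ℝ)
    (H : Mat d → Spc d → Spc d × ℝ → ℝ) : Prop :=
  ∀ φ : Spc d × ℝ → ℝ, ∀ p ∈ O, ContDiffAt ℝ 2 φ p →
    IsLocalMaxOn (fun q => u q - φ q) O p →
    timeDeriv φ p - H (spaceHess φ p) (spaceGrad φ p) p ≤ 0

/-- Viscosity supersolution of `∂ₜ u - H(D²u, Du, (x,t)) = 0` on `O`. -/
def ViscSupersol {d : ℕ} (O : Set (Spc d × ℝ)) (u : Spc d × ℝ → ℝ)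
    (H : Mat d → Spc d → Spc d × ℝ → ℝ) : Prop :=
  ∀ φ : Spc d × ℝ → ℝ, ∀ p ∈ O, ContDiffAt ℝ 2 φ p →
    IsLocalMinOn (fun q => u q - φ q) O p →
    0 ≤ timeDeriv φ p - H (spaceHess φ p) (spaceGrad φ p) p

/-- The half space `P_ν = {(x,t) : x·ν ≥ 0}`. -/
def Pnu {d : ℕ} (ν : Spc d) : Set (Spc d × ℝ) := {p | 0 ≤ dotR p.1 ν}
def bdryPnu {d : ℕ} (ν : Spc d) : Set (Spc d × ℝ) := {p | dotR p.1 ν = 0}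
def intPnu {d : ℕ} (ν : Spc d) : Set (Spc d × ℝ) := {p | 0 < dotR p.1 ν}

/-- The box `Q_L = {0 < x_ν < L, |x'| < L, |t| < L²}`. -/
def QL {d : ℕ} (ν : Spc d) (L : ℝ) : Set (Spc d × ℝ) :=
  {p | 0 < dotR p.1 ν ∧ dotR p.1 ν < L ∧ ‖p.1 - dotR p.1 ν • ν‖ < L ∧ |p.2| < L ^ 2}

def UnifElliptic {d : ℕ} {α : Type*} (lam Lam : ℝ) (F : Mat d → α → ℝ) : Prop :=
  ∀ M N : Mat d, M.IsSymm → N.PosSemidef → ∀ a : α,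
    lam * N.trace ≤ F (M + N) a - F M a ∧ F (M + N) a - F M a ≤ Lam * N.trace

/-- Bounded viscosity solution of a Dirichlet problem on `O` with boundary part `bd`. -/
def IsBddViscSolOn {d : ℕ} (O bd : Set (Spc d × ℝ)) (u : Spc d × ℝ → ℝ)
    (H : Mat d → Spc d → Spc d × ℝ → ℝ) (gbd : Spc d × ℝ → ℝ) : Prop :=
  ContinuousOn u (O ∪ bd) ∧ (∃ K : ℝ, ∀ p ∈ O ∪ bd, |u p| ≤ K) ∧
  ViscSubsol O u H ∧ ViscSupersol O u H ∧ ∀ p ∈ bd, u p = gbd p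

/-- `ℤ^d × ℤ` space-time periodicity. -/
def SpaceTimePeriodic {d : ℕ} (ρ : Spc d × ℝ → ℝ) : Prop :=
  ∀ (p : Spc d × ℝ) (k : Fin d → ℤ) (m : ℤ), ρ (p.1 + intVec k, p.2 + m) = ρ p

end

/-!
Compare `w` with the quadratic barrier
`φ = c₀ + A ((m + 1) x_ν / L - m x_ν² / L² + |x'|² / L² + t² / L⁴)`, `A = C₀ - c₀`.
On `closure Q_L` one has `(m + 1) σ - m σ² ≥ σ` for `σ = x_ν / L ∈ [0, 1]`, so `φ ≥ c₀` on the
face `x_ν = 0` and `φ ≥ C₀` on the rest of the boundary of `Q_L`. Since `D²φ ≤ (2A / L²) I` with a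
large negative `ν ⊗ ν` part, the choice `λ (m + 1) ≥ Λ d + 2` makes `P⁺(D²φ) ≤ -4A / L²`, which
beats `∂ₜφ ≥ -2A / L²` and the drift term, of size `O(εL) · A / L²`. Hence `φ` is a strict
supersolution, `w - φ` cannot attain its maximum over the compact set `closure Q_L` inside `Q_L`,
and so `w ≤ φ`, while `φ ≤ c₀ + A (m + 3) R / L` on `Q_R`.
-/

open scoped RealInnerProductSpace Matrix

theorem Matrix.IsHermitian.eigenvalues_le_of_posSemidef_sub {n : Type*} [Fintype n]
    [DecidableEq n] {M : Matrix n n ℝ} (hM : M.IsHermitian) {α : ℝ}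
    (h : (α • 1 - M).PosSemidef) (i : n) : hM.eigenvalues i ≤ α := by
  have hmem : α - hM.eigenvalues i ∈ spectrum ℝ (α • 1 - M) := by
    rw [← Algebra.algebraMap_eq_smul_one, ← spectrum.singleton_sub_eq]
    exact Set.sub_mem_sub rfl (hM.eigenvalues_mem_spectrum_real i)
  have : 0 ≤ α - hM.eigenvalues i :=
    (Matrix.posSemidef_iff_isHermitian_and_spectrum_nonneg.mp h).2 hmem
  linarith

theorem pucciPlus_le_of_posSemidef_sub {d : ℕ} {lam Lam α : ℝ} (hll : lam ≤ Lam) (hα : 0 ≤ α)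
    {M : Mat d} (hM : M.IsHermitian) (h : (α • 1 - M).PosSemidef) :
    pucciPlus lam Lam M ≤ lam * M.trace + (Lam - lam) * d * α := by
  have hterm (i : Fin d) : Lam * max (hM.eigenvalues i) 0 + lam * min (hM.eigenvalues i) 0
      ≤ lam * hM.eigenvalues i + (Lam - lam) * α := by
    have := hM.eigenvalues_le_of_posSemidef_sub h i
    rcases le_total (hM.eigenvalues i) 0 with hi | hi
    · rw [max_eq_right hi, min_eq_left hi]; nlinarith
    · rw [max_eq_left hi, min_eq_right hi]; nlinarith
  calc pucciPlus lam Lam M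
      ≤ ∑ i, (lam * hM.eigenvalues i + (Lam - lam) * α) := by
        rw [pucciPlus, dif_pos hM]; exact Finset.sum_le_sum fun i _ => hterm i
    _ = lam * M.trace + (Lam - lam) * d * α := by
        simp only [Finset.sum_add_distrib, ← Finset.mul_sum, Finset.sum_const, Finset.card_univ,
          Fintype.card_fin, nsmul_eq_mul, hM.trace_eq_sum_eigenvalues, Real.ringHom_apply]
        ring

theorem pucciPlus_smul_one_add_smul_vecMulVec_le {d : ℕ} {lam Lam α β : ℝ} (hll : lam ≤ Lam)
    (hα : 0 ≤ α) (hβ : β ≤ 0) {v : Fin d → ℝ} (hv : v ⬝ᵥ v = 1) :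
    pucciPlus lam Lam (α • 1 + β • Matrix.vecMulVec v v) ≤ Lam * d * α + lam * β := by
  have hM : (α • 1 + β • Matrix.vecMulVec v v : Mat d).IsHermitian :=
    (Matrix.isHermitian_one.smul (IsSelfAdjoint.all α)).add
      ((Matrix.posSemidef_vecMulVec_self_star v).isHermitian.smul (IsSelfAdjoint.all β))
  have hpsd : (α • 1 - (α • 1 + β • Matrix.vecMulVec v v) : Mat d).PosSemidef := by
    rw [sub_add_cancel_left, ← neg_smul]
    exact (Matrix.posSemidef_vecMulVec_self_star v).smul (neg_nonneg.mpr hβ)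
  have htr : (α • 1 + β • Matrix.vecMulVec v v : Mat d).trace = d * α + β := by
    simp [Matrix.trace_vecMulVec, hv, mul_comm]
  calc _ ≤ _ := pucciPlus_le_of_posSemidef_sub hll hα hM hpsd
    _ = Lam * d * α + lam * β := by rw [htr]; ring

section Calculus

variable {d : ℕ}

theorem dotR_eq_inner (x y : Spc d) : dotR x y = ⟪x, y⟫ := by
  simp [dotR, PiLp.inner_apply, mul_comm]

theorem hasFDerivAt_inner_const (ν x : Spc d) :
    HasFDerivAt (fun y => ⟪y, ν⟫) (innerSL ℝ ν) x :=
  (innerSL ℝ ν).hasFDerivAt.congr_of_eventuallyEq (.of_forall fun y => real_inner_comm ν y)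

theorem spaceGrad_eq_of_hasFDerivAt {φ : Spc d × ℝ → ℝ} {p : Spc d × ℝ} {g : Spc d}
    (h : HasFDerivAt (fun y => φ (y, p.2)) (innerSL ℝ g) p.1) : spaceGrad φ p = g := by
  ext i
  simp [spaceGrad, h.fderiv, EuclideanSpace.inner_single_right]

theorem spaceHess_apply_of_hasFDerivAt {φ : Spc d × ℝ → ℝ} {p : Spc d × ℝ} {g : Spc d → Spc d}
    {G : Spc d →L[ℝ] Spc d} (hφ : ∀ y, HasFDerivAt (fun z => φ (z, p.2)) (innerSL ℝ (g y)) y)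
    (hg : HasFDerivAt g G p.1) (i j : Fin d) :
    spaceHess φ p i j = G (EuclideanSpace.single i 1) j := by
  have hslice : (fun y => fderiv ℝ (fun z => φ (z, p.2)) y (EuclideanSpace.single j 1))
      = EuclideanSpace.proj j ∘ g := by
    funext y
    simp [(hφ y).fderiv, EuclideanSpace.inner_single_right]
  simp only [spaceHess, Matrix.of_apply, hslice,
    ((EuclideanSpace.proj j).hasFDerivAt.comp p.1 hg).fderiv]
  rfl

end Calculus

section Barrier

variable {d : ℕ} (c₀ k₁ k₂ k₃ k₄ : ℝ) (ν : Spc d)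

noncomputable def barrier (p : Spc d × ℝ) : ℝ :=
  c₀ + k₁ * ⟪p.1, ν⟫ + k₂ * ⟪p.1, ν⟫ ^ 2 + k₃ * ‖p.1‖ ^ 2 + k₄ * p.2 ^ 2

theorem contDiff_barrier : ContDiff ℝ 2 (barrier c₀ k₁ k₂ k₃ k₄ ν) := by
  have hν : ContDiff ℝ 2 fun p : Spc d × ℝ => ⟪p.1, ν⟫ := contDiff_fst.inner ℝ contDiff_const
  have hx : ContDiff ℝ 2 fun p : Spc d × ℝ => ‖p.1‖ ^ 2 := (contDiff_norm_sq ℝ).comp contDiff_fst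
  unfold barrier
  fun_prop

theorem hasFDerivAt_barrier_slice (t : ℝ) (x : Spc d) :
    HasFDerivAt (fun y => barrier c₀ k₁ k₂ k₃ k₄ ν (y, t))
      (innerSL ℝ ((k₁ + 2 * k₂ * ⟪x, ν⟫) • ν + (2 * k₃) • x)) x := by
  have hν := hasFDerivAt_inner_const ν x
  have h := ((((hν.const_mul k₁).add ((hν.pow 2).const_mul k₂)).add
    ((hasStrictFDerivAt_norm_sq x).hasFDerivAt.const_mul k₃)).const_add c₀).add_const (k₄ * t ^ 2)
  refine (h.congr_fderiv ?_).congr_of_eventuallyEq (.of_forall fun y => ?_)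
  · ext v
    simp only [real_inner_comm, Nat.add_one_sub_one, pow_one, nsmul_eq_mul, Nat.cast_ofNat,
      add_apply, smul_apply, coe_innerSL_apply, smul_eq_mul, map_add, map_smul]
    ring
  · simp only [barrier, Pi.add_apply]
    ring

theorem spaceGrad_barrier (p : Spc d × ℝ) :
    spaceGrad (barrier c₀ k₁ k₂ k₃ k₄ ν) p = (k₁ + 2 * k₂ * ⟪p.1, ν⟫) • ν + (2 * k₃) • p.1 :=
  spaceGrad_eq_of_hasFDerivAt (hasFDerivAt_barrier_slice c₀ k₁ k₂ k₃ k₄ ν p.2 p.1)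

theorem spaceHess_barrier (p : Spc d × ℝ) :
    spaceHess (barrier c₀ k₁ k₂ k₃ k₄ ν) p = (2 * k₃) • 1 + (2 * k₂) • Matrix.vecMulVec ν ν := by
  have hG : HasFDerivAt (fun y : Spc d => (k₁ + 2 * k₂ * ⟪y, ν⟫) • ν + (2 * k₃) • y)
      ((2 * k₂) • (innerSL ℝ ν).smulRight ν + (2 * k₃) • ContinuousLinearMap.id ℝ (Spc d)) p.1 := by
    have hν := hasFDerivAt_inner_const ν p.1
    refine ((((hν.const_mul (2 * k₂)).const_add k₁).smul_const ν).add
      ((hasFDerivAt_id p.1).const_smul (2 * k₃))).congr_fderiv ?_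
    ext v
    simp [mul_assoc]
  ext i j
  rw [spaceHess_apply_of_hasFDerivAt (hasFDerivAt_barrier_slice c₀ k₁ k₂ k₃ k₄ ν p.2) hG]
  simp only [add_apply, smul_apply, ContinuousLinearMap.smulRight_apply, coe_innerSL_apply,
    EuclideanSpace.inner_single_right, Real.ringHom_apply, one_mul, ContinuousLinearMap.id_apply,
    PiLp.add_apply, PiLp.smul_apply, smul_eq_mul, PiLp.single_apply, eq_comm, mul_ite, mul_one,
    mul_zero, Matrix.add_apply, Matrix.smul_apply, Matrix.one_apply, Matrix.vecMulVec_apply]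
  ring

theorem timeDeriv_barrier (p : Spc d × ℝ) :
    timeDeriv (barrier c₀ k₁ k₂ k₃ k₄ ν) p = 2 * k₄ * p.2 := by
  have h := ((hasDerivAt_pow 2 p.2).const_mul k₄).const_add
    (c₀ + k₁ * ⟪p.1, ν⟫ + k₂ * ⟪p.1, ν⟫ ^ 2 + k₃ * ‖p.1‖ ^ 2)
  simp only [timeDeriv, barrier]
  rw [h.deriv]
  ring

end Barrier

section Box

variable {d : ℕ} {ν : Spc d}

theorem norm_sq_eq_norm_sub_inner_smul_sq_add (hν : ‖ν‖ = 1) (x : Spc d) :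
    ‖x‖ ^ 2 = ‖x - ⟪x, ν⟫ • ν‖ ^ 2 + ⟪x, ν⟫ ^ 2 := by
  rw [norm_sub_sq_real, real_inner_smul_right, norm_smul, hν, Real.norm_eq_abs, mul_one, sq_abs]
  ring

theorem norm_le_abs_inner_add_norm_sub (hν : ‖ν‖ = 1) (x : Spc d) :
    ‖x‖ ≤ |⟪x, ν⟫| + ‖x - ⟪x, ν⟫ • ν‖ := by
  calc ‖x‖ = ‖⟪x, ν⟫ • ν + (x - ⟪x, ν⟫ • ν)‖ := by rw [add_sub_cancel]
    _ ≤ |⟪x, ν⟫| + ‖x - ⟪x, ν⟫ • ν‖ := by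
      grw [norm_add_le, norm_smul, hν, Real.norm_eq_abs, mul_one]

theorem norm_fst_le_of_mem_QL (hν : ‖ν‖ = 1) {L : ℝ} {p : Spc d × ℝ} (hp : p ∈ QL ν L) :
    ‖p.1‖ ≤ 2 * L := by
  obtain ⟨h₀, hL, hx, -⟩ := hp
  rw [dotR_eq_inner] at h₀ hL hx
  have := norm_le_abs_inner_add_norm_sub hν p.1
  rw [abs_of_pos h₀] at this
  linarith

theorem isBounded_QL (hν : ‖ν‖ = 1) (L : ℝ) : Bornology.IsBounded (QL ν L) := by
  refine ((Metric.isBounded_closedBall (x := (0 : Spc d)) (r := 2 * L)).prod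
    (Metric.isBounded_closedBall (x := (0 : ℝ)) (r := L ^ 2))).subset fun p hp => ⟨?_, ?_⟩
  · simpa using norm_fst_le_of_mem_QL hν hp
  · simpa using hp.2.2.2.le

theorem QL_subset_QL {R L : ℝ} (h : R ≤ L) : QL ν R ⊆ QL ν L := by
  rintro p ⟨h₀, hR, hx, ht⟩
  have hR₀ : 0 ≤ R := by linarith
  exact ⟨h₀, hR.trans_le h, hx.trans_le h, ht.trans_le (by gcongr)⟩

theorem closure_QL_subset (L : ℝ) : closure (QL ν L) ⊆
    {p | 0 ≤ dotR p.1 ν ∧ dotR p.1 ν ≤ L ∧ ‖p.1 - dotR p.1 ν • ν‖ ≤ L ∧ |p.2| ≤ L ^ 2} := by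
  have hs : Continuous fun p : Spc d × ℝ => dotR p.1 ν := by
    simp only [dotR_eq_inner]
    exact continuous_fst.inner continuous_const
  refine closure_minimal (fun p hp => ⟨hp.1.le, hp.2.1.le, hp.2.2.1.le, hp.2.2.2.le⟩) ?_
  exact (isClosed_le continuous_const hs).inter ((isClosed_le hs continuous_const).inter
    ((isClosed_le (continuous_fst.sub (hs.smul continuous_const)).norm continuous_const).inter
      (isClosed_le continuous_snd.abs continuous_const)))

end Box

theorem ViscSubsol.le_of_strictSupersolution {d : ℕ} {O : Set (Spc d × ℝ)}
    {w φ : Spc d × ℝ → ℝ} {H : Mat d → Spc d → Spc d × ℝ → ℝ} (hsub : ViscSubsol O w H)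
    (hO : Bornology.IsBounded O) (hw : UpperSemicontinuousOn w (closure O))
    (hφ : ContDiff ℝ 2 φ)
    (hstrict : ∀ q ∈ O, 0 < timeDeriv φ q - H (spaceHess φ q) (spaceGrad φ q) q)
    (hfront : ∀ q ∈ closure O \ O, w q ≤ φ q) :
    ∀ q ∈ closure O, w q ≤ φ q := by
  rcases (closure O).eq_empty_or_nonempty with hempty | hne
  · simp [hempty]
  have husc : UpperSemicontinuousOn (fun q => w q - φ q) (closure O) := by
    simpa only [sub_eq_add_neg, Pi.neg_apply] using
      hw.add hφ.continuous.neg.continuousOn.upperSemicontinuousOn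
  obtain ⟨q₀, hq₀, hmax⟩ := husc.exists_isMaxOn hne hO.isCompact_closure
  have hq₀O : q₀ ∉ O := fun hq₀O =>
    (hsub φ q₀ hq₀O hφ.contDiffAt
      (hmax.on_subset subset_closure).localize).not_gt
      (hstrict q₀ hq₀O)
  intro q hq
  have h₁ : w q - φ q ≤ w q₀ - φ q₀ := hmax hq
  have h₂ := hfront q₀ ⟨hq₀, hq₀O⟩
  linarith

section BoxBarrier

variable {d : ℕ} {ν : Spc d} {c₀ A m L : ℝ}

noncomputable def boxBarrier (c₀ A m L : ℝ) (ν : Spc d) : Spc d × ℝ → ℝ :=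
  barrier c₀ (A * (m + 1) / L) (-(A * (m + 1) / L ^ 2)) (A / L ^ 2) (A / L ^ 4) ν

theorem boxBarrier_eq (hν : ‖ν‖ = 1) (hL : L ≠ 0) (p : Spc d × ℝ) :
    boxBarrier c₀ A m L ν p = c₀ + A * ((m + 1) * (dotR p.1 ν / L) - m * (dotR p.1 ν / L) ^ 2
      + (‖p.1 - dotR p.1 ν • ν‖ / L) ^ 2 + (p.2 / L ^ 2) ^ 2) := by
  simp only [boxBarrier, barrier, dotR_eq_inner, norm_sq_eq_norm_sub_inner_smul_sq_add hν p.1]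
  field_simp
  ring

theorem boxBarrier_ge (hν : ‖ν‖ = 1) (hL : 0 < L) (hA : 0 ≤ A) (hm : 0 ≤ m) {p : Spc d × ℝ}
    (hp : p ∈ closure (QL ν L)) :
    c₀ + A * (dotR p.1 ν / L + (‖p.1 - dotR p.1 ν • ν‖ / L) ^ 2 + (p.2 / L ^ 2) ^ 2)
      ≤ boxBarrier c₀ A m L ν p := by
  obtain ⟨hs₀, hsL, -, -⟩ := closure_QL_subset L hp
  rw [boxBarrier_eq hν hL.ne']
  set σ := dotR p.1 ν / L
  have hσ₀ : 0 ≤ σ := div_nonneg hs₀ hL.le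
  have hσ₁ : σ ≤ 1 := (div_le_one hL).mpr hsL
  have : σ ≤ (m + 1) * σ - m * σ ^ 2 := by
    nlinarith [mul_nonneg (mul_nonneg hm hσ₀) (sub_nonneg.mpr hσ₁)]
  gcongr

theorem le_boxBarrier_of_mem_frontier {C₀ : ℝ} {w : Spc d × ℝ → ℝ} (hν : ‖ν‖ = 1) (hL : 0 < L)
    (hcC : c₀ ≤ C₀) (hm : 0 ≤ m) (hbdry : ∀ p ∈ closure (QL ν L) ∩ bdryPnu ν, w p ≤ c₀)
    (hbound : ∀ p ∈ closure (QL ν L), w p ≤ C₀) {p : Spc d × ℝ}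
    (hp : p ∈ closure (QL ν L) \ QL ν L) : w p ≤ boxBarrier c₀ (C₀ - c₀) m L ν p := by
  obtain ⟨hs₀, -, -, -⟩ := closure_QL_subset L hp.1
  have hge := boxBarrier_ge (c₀ := c₀) hν hL (sub_nonneg.mpr hcC) hm hp.1
  set σ := dotR p.1 ν / L
  set ρ := ‖p.1 - dotR p.1 ν • ν‖ / L
  set τ := p.2 / L ^ 2
  have hσ₀ : 0 ≤ σ := div_nonneg hs₀ hL.le
  have hA : 0 ≤ C₀ - c₀ := sub_nonneg.mpr hcC
  suffices h : dotR p.1 ν = 0 ∨ 1 ≤ σ + ρ ^ 2 + τ ^ 2 by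
    rcases h with hs | h
    · exact (hbdry p ⟨hp.1, hs⟩).trans ((le_add_of_nonneg_right (by positivity)).trans hge)
    · exact (hbound p hp.1).trans (le_trans (by nlinarith) hge)
  have hnot := hp.2
  simp only [QL, Set.mem_ofPred_eq, not_and_or, not_lt] at hnot
  rcases hnot with hs | hs | hx | ht
  · exact .inl (le_antisymm hs hs₀)
  · have : 1 ≤ σ := (one_le_div hL).mpr hs
    exact .inr (by nlinarith [sq_nonneg ρ, sq_nonneg τ])
  · have : 1 ≤ ρ := (one_le_div hL).mpr hx
    exact .inr (by nlinarith)
  · have : 1 ≤ |τ| := by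
      rwa [abs_div, abs_of_pos (pow_pos hL 2), one_le_div (pow_pos hL 2)]
    exact .inr (by nlinarith [sq_abs τ])

theorem boxBarrier_le_of_mem_QL (hν : ‖ν‖ = 1) (hA : 0 ≤ A) (hm : 0 ≤ m) {R : ℝ} (hRL : R < L)
    {p : Spc d × ℝ} (hp : p ∈ QL ν R) : boxBarrier c₀ A m L ν p ≤ c₀ + A * (m + 3) * R / L := by
  obtain ⟨hs₀, hsR, hx, ht⟩ := hp
  have hR : 0 < R := hs₀.trans hsR
  have hL : 0 < L := hR.trans hRL
  rw [boxBarrier_eq hν hL.ne', mul_assoc A, mul_div_assoc, mul_div_assoc]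
  set σ := dotR p.1 ν / L
  set ρ := ‖p.1 - dotR p.1 ν • ν‖ / L
  set τ := p.2 / L ^ 2
  set r := R / L
  have hr₁ : r < 1 := (div_lt_one hL).mpr hRL
  have hσ₀ : 0 < σ := div_pos hs₀ hL
  have hσ : σ < r := div_lt_div_of_pos_right hsR hL
  have hρ₀ : 0 ≤ ρ := by positivity
  have hρ : ρ < r := div_lt_div_of_pos_right hx hL
  have hρ₂ : ρ ^ 2 ≤ r := by nlinarith
  have hτ₂ : τ ^ 2 ≤ r := by
    have hτ : |τ| < r ^ 2 := by
      rw [abs_div, abs_of_pos (pow_pos hL 2), div_pow]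
      exact div_lt_div_of_pos_right ht (pow_pos hL 2)
    have hr₄ : r ^ 4 ≤ r := pow_le_of_le_one (by positivity) hr₁.le (by norm_num)
    nlinarith [sq_abs τ, abs_nonneg τ]
  have : (m + 1) * σ - m * σ ^ 2 + ρ ^ 2 + τ ^ 2 ≤ (m + 3) * r := by
    nlinarith [mul_nonneg hm (sq_nonneg σ)]
  gcongr

theorem timeDeriv_boxBarrier_ge (hA : 0 ≤ A) (hL : 0 < L) {q : Spc d × ℝ} (hq : q ∈ QL ν L) :
    -(2 * (A / L ^ 2)) ≤ timeDeriv (boxBarrier c₀ A m L ν) q := by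
  have ht : -(L ^ 2) < q.2 := (abs_lt.mp hq.2.2.2).1
  rw [boxBarrier, timeDeriv_barrier]
  have : 2 * (A / L ^ 4) * q.2 + 2 * (A / L ^ 2) = 2 * (A / L ^ 4) * (q.2 + L ^ 2) := by
    field_simp
  nlinarith [mul_nonneg (by positivity : (0 : ℝ) ≤ 2 * (A / L ^ 4)) (by linarith : 0 ≤ q.2 + L ^ 2)]

theorem pucciPlus_spaceHess_boxBarrier_le {lam Lam : ℝ} (hν : ‖ν‖ = 1) (hll : lam ≤ Lam)
    (hA : 0 ≤ A) (hm : 0 ≤ m) (q : Spc d × ℝ) :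
    pucciPlus lam Lam (spaceHess (boxBarrier c₀ A m L ν) q)
      ≤ 2 * (A / L ^ 2) * (Lam * d - lam * (m + 1)) := by
  have hνν : ⇑ν ⬝ᵥ ⇑ν = 1 := by
    have h := real_inner_self_eq_norm_sq ν
    rw [hν, one_pow, PiLp.inner_apply] at h
    simpa [dotProduct, sq] using h
  rw [boxBarrier, spaceHess_barrier]
  calc _ ≤ Lam * d * (2 * (A / L ^ 2)) + lam * (2 * -(A * (m + 1) / L ^ 2)) :=
        pucciPlus_smul_one_add_smul_vecMulVec_le hll (by positivity)
          (by have : 0 ≤ A * (m + 1) / L ^ 2 := by positivity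
              linarith) hνν
    _ = 2 * (A / L ^ 2) * (Lam * d - lam * (m + 1)) := by ring

theorem norm_spaceGrad_boxBarrier_le (hν : ‖ν‖ = 1) (hA : 0 ≤ A) (hm : 0 ≤ m) (hL : 0 < L)
    {q : Spc d × ℝ} (hq : q ∈ QL ν L) :
    ‖spaceGrad (boxBarrier c₀ A m L ν) q‖ ≤ A * (m + 5) / L := by
  have hx := norm_fst_le_of_mem_QL hν hq
  obtain ⟨hs₀, hsL, -, -⟩ := hq
  rw [dotR_eq_inner] at hs₀ hsL
  have hcoef : |A * (m + 1) / L + 2 * -(A * (m + 1) / L ^ 2) * ⟪q.1, ν⟫| ≤ A * (m + 1) / L := by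
    have : A * (m + 1) / L + 2 * -(A * (m + 1) / L ^ 2) * ⟪q.1, ν⟫
        = A * (m + 1) / L * (1 - 2 * (⟪q.1, ν⟫ / L)) := by
      field_simp
      ring
    rw [this, abs_mul, abs_of_nonneg (by positivity)]
    refine mul_le_of_le_one_right (by positivity) (abs_le.mpr ⟨?_, ?_⟩)
    · have : ⟪q.1, ν⟫ / L < 1 := (div_lt_one hL).mpr hsL
      linarith
    · have : 0 < ⟪q.1, ν⟫ / L := div_pos hs₀ hL
      linarith
  rw [boxBarrier, spaceGrad_barrier]
  calc _ ≤ |A * (m + 1) / L + 2 * -(A * (m + 1) / L ^ 2) * ⟪q.1, ν⟫| * ‖ν‖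
        + 2 * (A / L ^ 2) * ‖q.1‖ := by
        grw [norm_add_le, norm_smul, norm_smul, Real.norm_eq_abs, Real.norm_eq_abs,
          abs_of_nonneg (by positivity : 0 ≤ 2 * (A / L ^ 2))]
    _ ≤ A * (m + 1) / L * 1 + 2 * (A / L ^ 2) * (2 * L) := by
        rw [hν]; gcongr
    _ = A * (m + 5) / L := by field_simp; ring

theorem boxBarrier_strictSupersolution {lam Lam : ℝ} (hν : ‖ν‖ = 1) (hll : lam ≤ Lam)
    (hm₀ : 0 ≤ m) (hm : Lam * d + 2 ≤ lam * (m + 1)) (hA : 0 < A) (hL : 0 < L)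
    {q : Spc d × ℝ} (hq : q ∈ QL ν L) {β : ℝ} (hβ : |β| * ((m + 5) * L) ≤ 1) {e : Spc d}
    (he : ‖e‖ ≤ 1) :
    0 < timeDeriv (boxBarrier c₀ A m L ν) q
      - (pucciPlus lam Lam (spaceHess (boxBarrier c₀ A m L ν) q)
        + β * dotR e (spaceGrad (boxBarrier c₀ A m L ν) q)) := by
  set u := A / L ^ 2 with hu_def
  have hu : 0 < u := by positivity
  have hdrift : β * dotR e (spaceGrad (boxBarrier c₀ A m L ν) q) ≤ u := by
    calc β * dotR e (spaceGrad (boxBarrier c₀ A m L ν) q)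
        ≤ |β| * (‖e‖ * ‖spaceGrad (boxBarrier c₀ A m L ν) q‖) := by
          rw [dotR_eq_inner]
          exact (le_abs_self _).trans (by rw [abs_mul]; gcongr; exact abs_real_inner_le_norm _ _)
      _ ≤ |β| * (1 * (A * (m + 5) / L)) := by
          gcongr
          exact norm_spaceGrad_boxBarrier_le hν hA.le hm₀ hL hq
      _ = u * (|β| * ((m + 5) * L)) := by rw [hu_def]; field_simp
      _ ≤ u := mul_le_of_le_one_right hu.le hβ
  have htime := timeDeriv_boxBarrier_ge (c₀ := c₀) (m := m) hA.le hL hq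
  have hpucci := pucciPlus_spaceHess_boxBarrier_le (c₀ := c₀) (L := L) hν hll hA.le hm₀ q
  nlinarith

end BoxBarrier

theorem abs_drift_mul_le_one {K M ε L a b t : ℝ} (hK : 0 < K) (hM : 0 < M) (hε : 0 < ε)
    (hL : 0 < L) (ha : |a| ≤ K) (hb : |b| ≤ K) (ht : |t| ≤ L ^ 2)
    (hεL : L * ε ≤ min 1 (1 / (2 * K * M))) : |ε * a + ε ^ 3 * b * t| * (M * L) ≤ 1 := by
  have hεL₁ : ε * L ≤ 1 := by linarith [min_le_left 1 (1 / (2 * K * M))]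
  have hεL₂ : 2 * K * M * (ε * L) ≤ 1 := by
    rw [← le_div_iff₀' (by positivity)]
    linarith [min_le_right 1 (1 / (2 * K * M))]
  have hcoef : |ε * a + ε ^ 3 * b * t| ≤ 2 * K * ε := by
    calc |ε * a + ε ^ 3 * b * t| ≤ ε * |a| + ε ^ 3 * |b| * |t| := by
          grw [abs_add_le, abs_mul, abs_mul, abs_mul, abs_of_pos hε, abs_of_pos (pow_pos hε 3)]
      _ ≤ ε * K + ε ^ 3 * K * L ^ 2 := by gcongr
      _ = K * ε * (1 + (ε * L) ^ 2) := by ring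
      _ ≤ K * ε * 2 := by gcongr; nlinarith [mul_pos hε hL]
      _ = 2 * K * ε := by ring
  calc |ε * a + ε ^ 3 * b * t| * (M * L) ≤ 2 * K * ε * (M * L) := by gcongr
    _ = 2 * K * M * (ε * L) := by ring
    _ ≤ 1 := hεL₂

theorem stmt2_general (d : ℕ) (lam Lam c₀ C₀ K : ℝ) (hlam : 0 < lam) (hll : lam ≤ Lam)
    (hcC : c₀ < C₀) (hK : 0 < K) :
    ∃ c C : ℝ, 0 < c ∧ 0 < C ∧
      ∀ ν : Spc d, ‖ν‖ = 1 →
      ∀ c₁ c₂ : Spc d × ℝ → ℝ, Continuous c₁ → Continuous c₂ →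
        (∀ p, |c₁ p| ≤ K) → (∀ p, |c₂ p| ≤ K) →
      ∀ ξ : Spc d × ℝ → Spc d, Continuous ξ → (∀ p, ‖ξ p‖ = 1) →
      ∀ ε L : ℝ, 0 < ε → 0 < L → L * ε ≤ c →
      ∀ w : Spc d × ℝ → ℝ,
        UpperSemicontinuousOn w (closure (QL ν L)) →
        ViscSubsol (QL ν L) w
          (fun M Dw p => pucciPlus lam Lam M + (ε * c₁ p + ε ^ 3 * c₂ p * p.2) * dotR (ξ p) Dw) →
        (∀ p ∈ closure (QL ν L) ∩ bdryPnu ν, w p ≤ c₀) →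
        (∀ p ∈ closure (QL ν L), w p ≤ C₀) →
        ∀ R : ℝ, R < L → ∀ p ∈ QL ν R, w p ≤ c₀ + C * R / L := by
  set m := (Lam * d + 2) / lam with hm_def
  have hm₀ : 0 ≤ m := div_nonneg (by nlinarith [Nat.cast_nonneg (α := ℝ) d]) hlam.le
  have hm : Lam * d + 2 ≤ lam * (m + 1) := by
    rw [hm_def, mul_add, mul_div_cancel₀ _ hlam.ne']
    linarith
  have hA : 0 < C₀ - c₀ := sub_pos.mpr hcC
  refine ⟨min 1 (1 / (2 * K * (m + 5))), (C₀ - c₀) * (m + 3), by positivity, by positivity, ?_⟩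
  intro ν hν c₁ c₂ _ _ hc₁ hc₂ ξ _ hξ ε L hε hL hεL w hw hsub hbdry hbound R hRL p hp
  have hcomp : ∀ q ∈ closure (QL ν L), w q ≤ boxBarrier c₀ (C₀ - c₀) m L ν q :=
    hsub.le_of_strictSupersolution (isBounded_QL hν L) hw (contDiff_barrier ..)
      (fun q hq => boxBarrier_strictSupersolution hν hll hm₀ hm hA hL hq
        (abs_drift_mul_le_one hK (by positivity) hε hL (hc₁ q) (hc₂ q)
          hq.2.2.2.le hεL) (hξ q).le)
      (fun q hq => le_boxBarrier_of_mem_frontier hν hL hcC.le hm₀ hbdry hbound hq)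
  calc w p ≤ boxBarrier c₀ (C₀ - c₀) m L ν p := hcomp p (subset_closure (QL_subset_QL hRL.le hp))
    _ ≤ c₀ + (C₀ - c₀) * (m + 3) * R / L := boxBarrier_le_of_mem_QL hν hA.le hm₀ hRL hp

/-- Lemma 3.3: localization lemma with a small drift term.  The constants
`c, C` depend only on `λ, Λ, d, c₀, C₀, K`. -/
theorem stmt2 (d : ℕ) (hd : 1 ≤ d) (lam Lam c₀ C₀ K : ℝ) (hlam : 0 < lam) (hll : lam ≤ Lam)
    (hc₀ : 0 < c₀) (hcC : c₀ < C₀) (hK : 0 < K) :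
    ∃ c C : ℝ, 0 < c ∧ 0 < C ∧
      ∀ ν : Spc d, ‖ν‖ = 1 →
      ∀ c₁ c₂ : Spc d × ℝ → ℝ, Continuous c₁ → Continuous c₂ →
        (∀ p, |c₁ p| ≤ K) → (∀ p, |c₂ p| ≤ K) →
      ∀ ξ : Spc d × ℝ → Spc d, Continuous ξ → (∀ p, ‖ξ p‖ = 1) →
      ∀ ε L : ℝ, 0 < ε → 0 < L → L * ε ≤ c →
      ∀ w : Spc d × ℝ → ℝ,
        UpperSemicontinuousOn w (closure (QL ν L)) →
        ViscSubsol (QL ν L) w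
          (fun M Dw p => pucciPlus lam Lam M + (ε * c₁ p + ε ^ 3 * c₂ p * p.2) * dotR (ξ p) Dw) →
        (∀ p ∈ closure (QL ν L) ∩ bdryPnu ν, w p ≤ c₀) →
        (∀ p ∈ closure (QL ν L), w p ≤ C₀) →
        ∀ R : ℝ, R < L → ∀ p ∈ QL ν R, w p ≤ c₀ + C * R / L :=
  stmt2_general d lam Lam c₀ C₀ K hlam hll hcC hK
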